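/- arXiv:1102.2050 — 3 statements merged into one kernel-verified Lean document; each statement's English description precedes it below -/
import Mathlib

section
/- Proposition 3.4(2): Let X be a continuous 𝒜-martingale adapted to a filtration 𝔽 = (𝓕_t)_{t∈[0,1]}, with X_t ∈ L¹(Ω) for each t. Suppose that 𝒜 contains all bounded 𝓟(𝔽)-measurable processes, where 𝓟(𝔽) is the σ-algebra on [0,1)×Ω generated by all left-continuous 𝔽-adapted processes. Then X is an 𝔽-martingale. -/
open MeasureTheory Filter Set Topology

noncomputable section

variable {Ω : Type*} [MeasurableSpace Ω]

/-- Convention `X_t = X_{(t ∨ 0) ∧ 1}` for `t ∈ ℝ`. -/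
def Clamped (X : ℝ → Ω → ℝ) : Prop :=
  ∀ t ω, X t ω = X (max 0 (min t 1)) ω

/-- The regularization `I(ε, Y, X, t) = ε⁻¹ ∫₀ᵗ Y_s (X_{s+ε} - X_s) ds`. -/
def fwdApprox (Y X : ℝ → Ω → ℝ) (ε t : ℝ) (ω : Ω) : ℝ :=
  ε⁻¹ * ∫ s in (0:ℝ)..t, Y s ω * (X (s + ε) ω - X s ω)

/-- The regularization `C(ε, X, Y, t) = ε⁻¹ ∫₀ᵗ (X_{s+ε} - X_s)(Y_{s+ε} - Y_s) ds`. -/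
def covApprox (X Y : ℝ → Ω → ℝ) (ε t : ℝ) (ω : Ω) : ℝ :=
  ε⁻¹ * ∫ s in (0:ℝ)..t, (X (s + ε) ω - X s ω) * (Y (s + ε) ω - Y s ω)

/-- `J` is (a continuous version of) the forward integral `∫₀· Y d⁻X` on `[0,1]`:
for every `t ∈ [0,1]` the regularizations converge in probability to `J t`,
and `J` has continuous paths on `[0,1]`. -/
def IsForwardIntegral (P : Measure Ω) (Y X J : ℝ → Ω → ℝ) : Prop :=
  (∀ ω, ContinuousOn (fun t => J t ω) (Icc 0 1)) ∧
  ∀ t ∈ Icc (0:ℝ) 1,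
    TendstoInMeasure P (fun ε => fwdApprox Y X ε t) (𝓝[>] (0:ℝ)) (J t)

/-- Convergence uniformly in probability (ucp) on `[0,T]`, as `ε → 0⁺`. -/
def TendstoUcpOn (P : Measure Ω) (F : ℝ → ℝ → Ω → ℝ) (G : ℝ → Ω → ℝ) (T : ℝ) : Prop :=
  TendstoInMeasure P
    (fun ε ω => ⨆ t : Icc (0:ℝ) T, |F ε t.1 ω - G t.1 ω|) (𝓝[>] (0:ℝ)) (fun _ => 0)

/-- `C` is the covariation process `[X,Y]` on `[0,T]`. -/
def IsCovariationOn (P : Measure Ω) (X Y C : ℝ → Ω → ℝ) (T : ℝ) : Prop :=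
  (∀ ω, ContinuousOn (fun t => C t ω) (Icc 0 T)) ∧
  TendstoUcpOn P (covApprox X Y) C T

/-- `C` is the covariation process `[X,Y]` on `[0,1]`. -/
def IsCovariation (P : Measure Ω) (X Y C : ℝ → Ω → ℝ) : Prop :=
  IsCovariationOn P X Y C 1

/-- The restricted process `Y · 1_{[0,t]}`. -/
def restrTo (t : ℝ) (Y : ℝ → Ω → ℝ) : ℝ → Ω → ℝ :=
  fun s ω => Set.indicator (Icc 0 t) (fun u => Y u ω) s

/-- `J` is the improper forward integral process `∫₀· Y d⁻X` on `[0,1]`: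
on each `[0,t]`, `t < 1`, it is the forward integral of `Y·1_{[0,t]}` w.r.t. `X`,
and `J t → J 1` a.s. as `t → 1⁻`. -/
def IsImproperForwardIntegral (P : Measure Ω) (Y X J : ℝ → Ω → ℝ) : Prop :=
  (∀ t ∈ Ico (0:ℝ) 1,
    IsForwardIntegral P (restrTo t Y) X (fun u ω => J (min u t) ω)) ∧
  ∀ᵐ ω ∂P, Tendsto (fun t => J t ω) (𝓝[<] (1:ℝ)) (𝓝 (J 1 ω))

/-- `C` is the improper covariation `[X,Y]`: it is the covariation on every `[0,t]`,
`t < 1`, and `C t → C 1` a.s. as `t → 1⁻`. -/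
def IsImproperCovariation (P : Measure Ω) (X Y C : ℝ → Ω → ℝ) : Prop :=
  (∀ t ∈ Ico (0:ℝ) 1, IsCovariationOn P X Y C t) ∧
  ∀ᵐ ω ∂P, Tendsto (fun t => C t ω) (𝓝[<] (1:ℝ)) (𝓝 (C 1 ω))

/-- `M` is an `𝒜`-martingale under `P`: every `θ ∈ 𝒜` is `M`-improperly forward
integrable and `E[∫₀ᵗ θ d⁻M] = 0` for every `t ∈ [0,1]`. -/
def IsAMartingale (P : Measure Ω) (𝒜 : Set (ℝ → Ω → ℝ)) (M : ℝ → Ω → ℝ) : Prop :=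
  ∀ θ ∈ 𝒜, ∃ J : ℝ → Ω → ℝ,
    IsImproperForwardIntegral P θ M J ∧
    ∀ t ∈ Icc (0:ℝ) 1, ∫ ω, J t ω ∂P = 0

/-- `𝒜` is a real linear space of measurable processes (indexed by `[0,1)`)
whose paths are bounded on each compact interval of `[0,1)`. -/
def IsAdmissibleClass (𝒜 : Set (ℝ → Ω → ℝ)) : Prop :=
  (∀ c : ℝ, ∀ θ ∈ 𝒜, (fun t ω => c * θ t ω) ∈ 𝒜) ∧
  (∀ θ ∈ 𝒜, ∀ η ∈ 𝒜, (fun t ω => θ t ω + η t ω) ∈ 𝒜) ∧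
  (∀ θ ∈ 𝒜, Measurable (Function.uncurry θ)) ∧
  (∀ θ ∈ 𝒜, ∀ ω, ∀ T ∈ Ico (0:ℝ) 1, ∃ K, ∀ t ∈ Icc (0:ℝ) T, |θ t ω| ≤ K)

/-- A process which is left continuous and `𝔽`-adapted. -/
def IsLeftContinuousAdapted (𝓕 : ℝ → MeasurableSpace Ω) (Y : ℝ → Ω → ℝ) : Prop :=
  (∀ ω t, ContinuousWithinAt (fun s => Y s ω) (Iio t) t) ∧
  ∀ t, Measurable[𝓕 t] (Y t)

/-- The σ-algebra `𝓟(𝔽)` generated by all left-continuous `𝔽`-adapted processes. -/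
def predictableSigma (𝓕 : ℝ → MeasurableSpace Ω) : MeasurableSpace (ℝ × Ω) :=
  ⨆ (Y : ℝ → Ω → ℝ) (_ : IsLeftContinuousAdapted 𝓕 Y),
    MeasurableSpace.comap (fun p => Y p.1 p.2) (inferInstance : MeasurableSpace ℝ)

/-!
For `s < t` and `A ∈ 𝓕_s`, the integrand `1_{(s,∞)×A}` is left continuous, adapted and bounded,
hence belongs to `𝒜`. Its forward regularization against a continuous `X` converges pathwise to
`1_A (X_t - X_s)`, so its forward integral is that process a.s. (for `t = 1` by letting `t → 1⁻`).
The `𝒜`-martingale property then gives `E[1_A (X_t - X_s)] = 0`, which characterizes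
`X_s = E[X_t | 𝓕_s]`.
-/

omit [MeasurableSpace Ω] in
theorem Clamped.continuous {X : ℝ → Ω → ℝ} (hX : Clamped X) {ω : Ω}
    (hω : ContinuousOn (fun t => X t ω) (Icc 0 1)) : Continuous fun t => X t ω := by
  have hproj : Continuous fun u : ℝ => max 0 (min u 1) :=
    continuous_const.max (continuous_id.min continuous_const)
  have hcomp : Continuous ((fun v => X v ω) ∘ fun u : ℝ => max 0 (min u 1)) :=
    hω.comp_continuous hproj fun u => ⟨le_max_left _ _, max_le zero_le_one (min_le_right _ _)⟩
  exact hcomp.congr fun u => (hX u ω).symm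

theorem tendsto_inv_mul_integral_self_add {x : ℝ → ℝ} (hx : Continuous x) (a : ℝ) :
    Tendsto (fun ε => ε⁻¹ * ∫ r in a..a + ε, x r) (𝓝[>] 0) (𝓝 (x a)) := by
  simpa using (hx.integral_hasStrictDerivAt a a).hasDerivAt.tendsto_slope_zero_right

theorem tendsto_inv_mul_integral_sub_comp_add {x : ℝ → ℝ} (hx : Continuous x) (a b : ℝ) :
    Tendsto (fun ε => ε⁻¹ * ∫ r in a..b, (x (r + ε) - x r)) (𝓝[>] 0) (𝓝 (x b - x a)) := by
  have hshift : ∀ ε, ∫ r in a..b, (x (r + ε) - x r) =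
      (∫ r in b..b + ε, x r) - ∫ r in a..a + ε, x r := fun ε => by
    have hxε : Continuous fun r => x (r + ε) := hx.comp (continuous_add_const ε)
    rw [intervalIntegral.integral_sub (hxε.intervalIntegrable _ _) (hx.intervalIntegrable _ _),
      intervalIntegral.integral_comp_add_right]
    exact intervalIntegral.integral_interval_sub_interval_comm' (hx.intervalIntegrable _ _)
      (hx.intervalIntegrable _ _) (hx.intervalIntegrable _ _)
  simp_rw [hshift, mul_sub]
  exact (tendsto_inv_mul_integral_self_add hx b).sub (tendsto_inv_mul_integral_self_add hx a)

theorem intervalIntegral_indicator_Ioi {E : Type*} [NormedAddCommGroup E] [NormedSpace ℝ E]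
    {f : ℝ → E} {a s b : ℝ} (has : a ≤ s) (hsb : s ≤ b) :
    ∫ r in a..b, (Ioi s).indicator f r = ∫ r in s..b, f r := by
  rw [intervalIntegral.integral_of_le (has.trans hsb), setIntegral_indicator measurableSet_Ioi,
    Ioc_inter_Ioi, max_eq_right has, intervalIntegral.integral_of_le hsb]

theorem TendstoInMeasure.ae_eq_of_tendsto {α ι E : Type*} [MeasurableSpace α] {μ : Measure α}
    [EMetricSpace E] {u : Filter ι} [u.NeBot] [u.IsCountablyGenerated] {f : ι → α → E}
    {g h : α → E} (hg : TendstoInMeasure μ f u g) (hh : ∀ a, Tendsto (fun i => f i a) u (𝓝 (h a))) :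
    g =ᵐ[μ] h := by
  obtain ⟨ns, hns, hns_ae⟩ := hg.exists_seq_tendsto_ae'
  filter_upwards [hns_ae] with a ha
  exact tendsto_nhds_unique ha ((hh a).comp hns)

theorem ae_eq_of_forall_Ioo_of_tendsto_nhdsLT {P : Measure Ω} {F G : ℝ → Ω → ℝ} {s b : ℝ}
    (hsb : s < b) (hFG : ∀ t ∈ Ioo s b, F t =ᵐ[P] G t)
    (hF : ∀ᵐ ω ∂P, Tendsto (fun t => F t ω) (𝓝[<] b) (𝓝 (F b ω)))
    (hG : ∀ᵐ ω ∂P, Tendsto (fun t => G t ω) (𝓝[<] b) (𝓝 (G b ω))) :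
    F b =ᵐ[P] G b := by
  obtain ⟨u, -, hu_mem, hu_lim⟩ := exists_seq_strictMono_tendsto' hsb
  have hu : Tendsto u atTop (𝓝[<] b) :=
    tendsto_nhdsWithin_iff.mpr ⟨hu_lim, Eventually.of_forall fun n => (hu_mem n).2⟩
  filter_upwards [ae_all_iff.mpr fun n => hFG (u n) (hu_mem n), hF, hG] with ω hω hFω hGω
  exact tendsto_nhds_unique (hFω.comp hu) ((hGω.comp hu).congr fun n => (hω n).symm)

theorem IsImproperForwardIntegral.ae_eq_of_tendsto_fwdApprox {P : Measure Ω}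
    {Y X J : ℝ → Ω → ℝ} (hJ : IsImproperForwardIntegral P Y X J) {t : ℝ} (ht : t ∈ Ico 0 1)
    {G : Ω → ℝ} (hG : ∀ ω, Tendsto (fun ε => fwdApprox (restrTo t Y) X ε t ω) (𝓝[>] 0) (𝓝 (G ω))) :
    J t =ᵐ[P] G := by
  simpa only [min_self] using TendstoInMeasure.ae_eq_of_tendsto ((hJ.1 t ht).2 t ⟨ht.1, ht.2.le⟩) hG

omit [MeasurableSpace Ω] in
theorem IsLeftContinuousAdapted.measurable_predictableSigma {𝓕 : ℝ → MeasurableSpace Ω}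
    {Y : ℝ → Ω → ℝ} (hY : IsLeftContinuousAdapted 𝓕 Y) :
    Measurable[predictableSigma 𝓕] fun p : ℝ × Ω => Y p.1 p.2 :=
  measurable_iff_comap_le.mpr <|
    le_iSup₂ (f := fun (Y : ℝ → Ω → ℝ) (_ : IsLeftContinuousAdapted 𝓕 Y) =>
      MeasurableSpace.comap (fun p : ℝ × Ω => Y p.1 p.2) inferInstance) Y hY

theorem continuousWithinAt_Iio_indicator_Ioi_const {β : Type*} [TopologicalSpace β] [Zero β]
    (s t : ℝ) (c : β) :
    ContinuousWithinAt ((Ioi s).indicator fun _ => c) (Iio t) t := by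
  by_cases hst : s < t
  · have hconst : (Ioi s).indicator (fun _ => c) =ᶠ[𝓝 t] fun _ => c := by
      filter_upwards [Ioi_mem_nhds hst] with r hr using indicator_of_mem hr _
    exact (continuousAt_const.congr hconst.symm).continuousWithinAt
  · have hzero : ∀ r ≤ t, (Ioi s).indicator (fun _ => c) r = 0 := fun r hr =>
      indicator_of_notMem (fun hsr : s < r => hst (hsr.trans_le hr)) _
    exact continuousWithinAt_const.congr (fun r hr => hzero r (le_of_lt hr)) (hzero t le_rfl)

def stepIntegrand (s : ℝ) (A : Set Ω) (u : ℝ) : Ω → ℝ :=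
  if s < u then A.indicator 1 else 0

omit [MeasurableSpace Ω] in
theorem stepIntegrand_apply (s : ℝ) (A : Set Ω) (u : ℝ) (ω : Ω) :
    stepIntegrand s A u ω = (Ioi s).indicator (fun _ => A.indicator 1 ω) u := by
  by_cases h : s < u <;> simp [stepIntegrand, h]

omit [MeasurableSpace Ω] in
theorem abs_stepIntegrand_le_one (s : ℝ) (A : Set Ω) (u : ℝ) (ω : Ω) :
    |stepIntegrand s A u ω| ≤ 1 := by
  rw [stepIntegrand_apply]
  by_cases h₁ : s < u <;> by_cases h₂ : ω ∈ A <;> simp [h₁, h₂]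

omit [MeasurableSpace Ω] in
theorem isLeftContinuousAdapted_stepIntegrand {𝓕 : ℝ → MeasurableSpace Ω}
    (h𝓕 : ∀ s t : ℝ, s ≤ t → 𝓕 s ≤ 𝓕 t) {s : ℝ} {A : Set Ω} (hA : MeasurableSet[𝓕 s] A) :
    IsLeftContinuousAdapted 𝓕 (stepIntegrand s A) := by
  refine ⟨fun ω t => ?_, fun t => ?_⟩
  · simp_rw [stepIntegrand_apply]
    exact continuousWithinAt_Iio_indicator_Ioi_const s t _
  · unfold stepIntegrand
    split_ifs with hst
    · exact measurable_const.indicator (h𝓕 s t hst.le A hA)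
    · exact measurable_const

omit [MeasurableSpace Ω] in
theorem fwdApprox_restrTo_stepIntegrand (X : ℝ → Ω → ℝ) (A : Set Ω) {s t : ℝ} (hs : 0 ≤ s)
    (hst : s ≤ t) (ε : ℝ) (ω : Ω) :
    fwdApprox (restrTo t (stepIntegrand s A)) X ε t ω =
      A.indicator 1 ω * (ε⁻¹ * ∫ r in s..t, (X (r + ε) ω - X r ω)) := by
  have hintegrand : ∀ r ∈ uIcc 0 t, restrTo t (stepIntegrand s A) r ω * (X (r + ε) ω - X r ω) =
      A.indicator 1 ω * (Ioi s).indicator (fun r => X (r + ε) ω - X r ω) r := fun r hr => by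
    rw [uIcc_of_le (hs.trans hst)] at hr
    simp only [restrTo, indicator_of_mem hr, stepIntegrand_apply, indicator_apply, mem_Ioi]
    split_ifs <;> ring
  rw [fwdApprox, intervalIntegral.integral_congr hintegrand, intervalIntegral.integral_const_mul,
    intervalIntegral_indicator_Ioi hs hst]
  ring

omit [MeasurableSpace Ω] in
theorem tendsto_fwdApprox_restrTo_stepIntegrand {X : ℝ → Ω → ℝ} {ω : Ω}
    (hX : Continuous fun u => X u ω) (A : Set Ω) {s t : ℝ} (hs : 0 ≤ s) (hst : s ≤ t) :
    Tendsto (fun ε => fwdApprox (restrTo t (stepIntegrand s A)) X ε t ω) (𝓝[>] 0)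
      (𝓝 (A.indicator 1 ω * (X t ω - X s ω))) := by
  simp_rw [fwdApprox_restrTo_stepIntegrand X A hs hst]
  exact (tendsto_inv_mul_integral_sub_comp_add hX s t).const_mul _

theorem IsImproperForwardIntegral.ae_eq_of_stepIntegrand {P : Measure Ω} {X J : ℝ → Ω → ℝ}
    {A : Set Ω} {s t : ℝ} (hJ : IsImproperForwardIntegral P (stepIntegrand s A) X J)
    (hX : ∀ ω, Continuous fun u => X u ω) (hs : 0 ≤ s) (hst : s < t) (ht : t ≤ 1) :
    J t =ᵐ[P] fun ω => A.indicator 1 ω * (X t ω - X s ω) := by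
  have hlt : ∀ u ∈ Ioo s 1, J u =ᵐ[P] fun ω => A.indicator 1 ω * (X u ω - X s ω) :=
    fun u hu => hJ.ae_eq_of_tendsto_fwdApprox ⟨hs.trans hu.1.le, hu.2⟩
      fun ω => tendsto_fwdApprox_restrTo_stepIntegrand (hX ω) A hs hu.1.le
  rcases ht.lt_or_eq with ht | rfl
  · exact hlt t ⟨hst, ht⟩
  · refine ae_eq_of_forall_Ioo_of_tendsto_nhdsLT hst hlt hJ.2 (Eventually.of_forall fun ω => ?_)
    exact ((((hX ω).tendsto 1).mono_left nhdsWithin_le_nhds).sub_const _).const_mul _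

theorem setIntegral_eq_of_isAMartingale {P : Measure Ω}
    {𝓕 : ℝ → MeasurableSpace Ω} (h𝓕mono : ∀ s t : ℝ, s ≤ t → 𝓕 s ≤ 𝓕 t)
    {𝒜 : Set (ℝ → Ω → ℝ)} {X : ℝ → Ω → ℝ} (hX : ∀ ω, Continuous fun u => X u ω)
    (hXmart : IsAMartingale P 𝒜 X)
    (hcontains : ∀ θ : ℝ → Ω → ℝ,
      Measurable[predictableSigma 𝓕] (fun p : ℝ × Ω => θ p.1 p.2) →
      (∃ K, ∀ t ω, |θ t ω| ≤ K) → θ ∈ 𝒜)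
    {s t : ℝ} (hs : 0 ≤ s) (hst : s ≤ t) (ht : t ≤ 1)
    (hXs : Integrable (X s) P) (hXt : Integrable (X t) P)
    {A : Set Ω} (hA𝓕 : MeasurableSet[𝓕 s] A) (hA : MeasurableSet A) :
    ∫ ω in A, X t ω ∂P = ∫ ω in A, X s ω ∂P := by
  rcases hst.eq_or_lt with rfl | hst
  · rfl
  obtain ⟨J, hJ, hJ_zero⟩ := hXmart _ <| hcontains _
    (isLeftContinuousAdapted_stepIntegrand h𝓕mono hA𝓕).measurable_predictableSigma
    ⟨1, abs_stepIntegrand_le_one s A⟩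
  have hmean : ∫ ω, A.indicator 1 ω * (X t ω - X s ω) ∂P = 0 := by
    rw [← integral_congr_ae (hJ.ae_eq_of_stepIntegrand hX hs hst ht)]
    exact hJ_zero t ⟨hs.trans hst.le, ht⟩
  have hind : ∀ ω, A.indicator 1 ω * (X t ω - X s ω) = A.indicator (fun ω => X t ω - X s ω) ω :=
    fun ω => by by_cases hω : ω ∈ A <;> simp [hω]
  simp_rw [hind] at hmean
  rwa [integral_indicator hA, integral_sub hXt.integrableOn hXs.integrableOn, sub_eq_zero] at hmean

theorem A_martingale_is_martingale_of_contains_bounded_predictable_general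
    (P : Measure Ω) [IsProbabilityMeasure P]
    (𝓕 : ℝ → MeasurableSpace Ω)
    (h𝓕mono : ∀ s t : ℝ, s ≤ t → 𝓕 s ≤ 𝓕 t)
    (h𝓕le : ∀ t, 𝓕 t ≤ ‹MeasurableSpace Ω›)
    (𝒜 : Set (ℝ → Ω → ℝ))
    (X : ℝ → Ω → ℝ) (hXclamp : Clamped X)
    (hXcont : ∀ ω, ContinuousOn (fun t => X t ω) (Icc 0 1))
    (hXadapted : ∀ t ∈ Icc (0:ℝ) 1, Measurable[𝓕 t] (X t))
    (hXint : ∀ t ∈ Icc (0:ℝ) 1, Integrable (X t) P)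
    (hXmart : IsAMartingale P 𝒜 X)
    (hcontains : ∀ θ : ℝ → Ω → ℝ,
      Measurable[predictableSigma 𝓕] (fun p : ℝ × Ω => θ p.1 p.2) →
      (∃ K, ∀ t ω, |θ t ω| ≤ K) → θ ∈ 𝒜) :
    ∀ s t : ℝ, 0 ≤ s → s ≤ t → t ≤ 1 →
      X s =ᵐ[P] P[X t | 𝓕 s] := by
  intro s t hs hst ht
  have hs_mem : s ∈ Icc (0:ℝ) 1 := ⟨hs, hst.trans ht⟩
  have ht_mem : t ∈ Icc (0:ℝ) 1 := ⟨hs.trans hst, ht⟩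
  refine ae_eq_condExp_of_forall_setIntegral_eq (h𝓕le s) (hXint t ht_mem)
    (fun A _ _ => (hXint s hs_mem).integrableOn) (fun A hA _ => ?_)
    (hXadapted s hs_mem).stronglyMeasurable.aestronglyMeasurable
  exact (setIntegral_eq_of_isAMartingale h𝓕mono (fun ω => hXclamp.continuous (hXcont ω)) hXmart
    hcontains hs hst ht (hXint s hs_mem) (hXint t ht_mem) hA (h𝓕le s A hA)).symm

/-- Proposition 3.4(2): a continuous `𝒜`-martingale `X` adapted to `𝔽`, with `X_t ∈ L¹`,
is an `𝔽`-martingale whenever `𝒜` contains all bounded `𝓟(𝔽)`-measurable processes. -/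
theorem A_martingale_is_martingale_of_contains_bounded_predictable
    (P : Measure Ω) [IsProbabilityMeasure P]
    (𝓕 : ℝ → MeasurableSpace Ω)
    (h𝓕mono : ∀ s t : ℝ, s ≤ t → 𝓕 s ≤ 𝓕 t)
    (h𝓕le : ∀ t, 𝓕 t ≤ ‹MeasurableSpace Ω›)
    (𝒜 : Set (ℝ → Ω → ℝ)) (h𝒜 : IsAdmissibleClass 𝒜)
    (X : ℝ → Ω → ℝ) (hXclamp : Clamped X)
    (hXcont : ∀ ω, ContinuousOn (fun t => X t ω) (Icc 0 1))
    (hXadapted : ∀ t ∈ Icc (0:ℝ) 1, Measurable[𝓕 t] (X t))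
    (hXint : ∀ t ∈ Icc (0:ℝ) 1, Integrable (X t) P)
    (hXmart : IsAMartingale P 𝒜 X)
    (hcontains : ∀ θ : ℝ → Ω → ℝ,
      Measurable[predictableSigma 𝓕] (fun p : ℝ × Ω => θ p.1 p.2) →
      (∃ K, ∀ t ω, |θ t ω| ≤ K) → θ ∈ 𝒜) :
    ∀ s t : ℝ, 0 ≤ s → s ≤ t → t ≤ 1 →
      X s =ᵐ[P] P[X t | 𝓕 s] :=
  A_martingale_is_martingale_of_contains_bounded_predictable_general P 𝓕 h𝓕mono h𝓕le 𝒜 X hXclamp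
    hXcont hXadapted hXint hXmart hcontains
end
end

section
/- Proposition 4.26: Suppose the market is 𝒜-arbitrage free and that Assumption 4.25 holds: for every 𝒢₀-measurable random variable η and every h ∈ 𝒜, the process ηh belongs to 𝒜. Then the replication price of an 𝒜-attainable contingent claim is unique: if (X₀,h) and (Y₀,k), with h, k ∈ 𝒜 both S-improperly forward integrable, both replicate the same contingent claim C, then X₀ = Y₀ almost surely. -/
open MeasureTheory Filter Set Topology

noncomputable section

variable {Ω : Type*} [MeasurableSpace Ω]

/-- `h` (with zero initial wealth) is an arbitrage: it is `S`-improperly forward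
integrable, with terminal wealth `X₁ = ∫₀¹ h d⁻S ≥ 0` a.s. and `P(X₁ > 0) > 0`. -/
def IsArbitrage (P : Measure Ω) (S h : ℝ → Ω → ℝ) : Prop :=
  ∃ J : ℝ → Ω → ℝ, IsImproperForwardIntegral P h S J ∧
    (∀ᵐ ω ∂P, 0 ≤ J 1 ω) ∧ 0 < P {ω | 0 < J 1 ω}

/-- The market is `𝒜`-arbitrage free. -/
def ArbitrageFree (P : Measure Ω) (S : ℝ → Ω → ℝ) (𝒜 : Set (ℝ → Ω → ℝ)) : Prop :=
  ∀ h ∈ 𝒜, ¬ IsArbitrage P S h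

/-!
If `(X₀, h)` and `(Y₀, k)` both replicate `C`, then `Jk 1 - Jh 1 = X₀ - Y₀` a.s. Trading the
self-financing portfolio `k - h` in the direction `η = sign (X₀ - Y₀)`, which is known at time
`0`, yields the terminal wealth `η (Jk 1 - Jh 1) = |X₀ - Y₀| ≥ 0`; the absence of arbitrage
forces it to vanish a.s.
-/

namespace MeasureTheory

variable {α ι E : Type*} {m : MeasurableSpace α} {μ : Measure α} {l : Filter ι}

theorem TendstoInMeasure.sub [SeminormedAddCommGroup E] {f f' : ι → α → E} {g g' : α → E}
    (hf : TendstoInMeasure μ f l g) (hf' : TendstoInMeasure μ f' l g') :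
    TendstoInMeasure μ (f - f') l (g - g') := by
  rw [tendstoInMeasure_iff_norm] at hf hf' ⊢
  intro δ hδ
  have hsplit : ∀ i, μ {x | δ ≤ ‖(f - f') i x - (g - g') x‖}
      ≤ μ {x | δ / 2 ≤ ‖f i x - g x‖} + μ {x | δ / 2 ≤ ‖f' i x - g' x‖} := by
    intro i
    refine (measure_mono fun x hx => ?_).trans (measure_union_le _ _)
    have htri : ‖(f - f') i x - (g - g') x‖ ≤ ‖f i x - g x‖ + ‖f' i x - g' x‖ := by
      simpa only [Pi.sub_apply, sub_sub_sub_comm] using norm_sub_le (f i x - g x) (f' i x - g' x)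
    by_contra hx'
    simp only [Set.mem_union, Set.mem_ofPred_eq, not_or, not_le] at hx hx'
    linarith [hx'.1, hx'.2]
  have hsum := (hf (δ / 2) (half_pos hδ)).add (hf' (δ / 2) (half_pos hδ))
  rw [add_zero] at hsum
  exact tendsto_of_tendsto_of_tendsto_of_le_of_le tendsto_const_nhds hsum (fun _ => zero_le) hsplit

theorem TendstoInMeasure.mul_left_of_bounded {f : ι → α → ℝ} {g η : α → ℝ} {c : ℝ}
    (hη : ∀ x, |η x| ≤ c) (hf : TendstoInMeasure μ f l g) :
    TendstoInMeasure μ (fun i x => η x * f i x) l (fun x => η x * g x) := by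
  rw [tendstoInMeasure_iff_norm] at hf ⊢
  intro δ hδ
  have hc : 0 < |c| + 1 := by positivity
  refine tendsto_of_tendsto_of_tendsto_of_le_of_le tendsto_const_nhds
    (hf (δ / (|c| + 1)) (div_pos hδ hc)) (fun _ => zero_le) fun i => measure_mono fun x hx => ?_
  simp only [Set.mem_ofPred_eq, Real.norm_eq_abs, ← mul_sub, abs_mul] at hx ⊢
  rw [div_le_iff₀ hc]
  nlinarith [abs_nonneg (f i x - g x), hη x, le_abs_self c]

end MeasureTheory

theorem Real.sign_mul_self_eq_abs (r : ℝ) : Real.sign r * r = |r| := by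
  rcases lt_trichotomy r 0 with hr | rfl | hr
  · rw [Real.sign_of_neg hr, abs_of_neg hr, neg_one_mul]
  · simp
  · rw [Real.sign_of_pos hr, abs_of_pos hr, one_mul]

theorem Real.abs_sign_le_one (r : ℝ) : |Real.sign r| ≤ 1 := by
  rcases Real.sign_apply_eq r with h | h | h <;> simp [h]

theorem Real.monotone_sign : Monotone Real.sign := by
  intro a b hab
  unfold Real.sign
  split_ifs <;> linarith

theorem Real.measurable_sign : Measurable Real.sign :=
  Real.monotone_sign.measurable

omit [MeasurableSpace Ω] in
theorem Clamped.continuous_path {X : ℝ → Ω → ℝ} (hX : Clamped X) {ω : Ω}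
    (hcont : ContinuousOn (fun t => X t ω) (Icc 0 1)) : Continuous fun t => X t ω := by
  have hclamp : Continuous fun t : ℝ => max 0 (min t 1) :=
    continuous_const.max (continuous_id.min continuous_const)
  have hmem : ∀ t : ℝ, max 0 (min t 1) ∈ Icc (0:ℝ) 1 := fun t =>
    ⟨le_max_left _ _, max_le zero_le_one (min_le_right t 1)⟩
  convert hcont.comp_continuous hclamp hmem using 1
  exact funext fun t => hX t ω

omit [MeasurableSpace Ω] in
theorem restrTo_mul_sub (t : ℝ) (η : Ω → ℝ) (Y Y' : ℝ → Ω → ℝ) :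
    restrTo t (fun s ω => η ω * (Y s ω - Y' s ω))
      = fun s ω => η ω * (restrTo t Y s ω - restrTo t Y' s ω) := by
  funext s ω
  by_cases hs : s ∈ Icc (0:ℝ) t <;> simp [restrTo, hs]

omit [MeasurableSpace Ω] in
theorem intervalIntegrable_restrTo_mul_increment {Y X : ℝ → Ω → ℝ} {t : ℝ} {ω : Ω}
    (hYm : Measurable fun s => Y s ω) (hYb : ∃ K, ∀ s ∈ Icc (0:ℝ) t, |Y s ω| ≤ K)
    (hX : Continuous fun s => X s ω) (ε u : ℝ) :
    IntervalIntegrable (fun s => restrTo t Y s ω * (X (s + ε) ω - X s ω)) volume 0 u := by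
  obtain ⟨K, hK⟩ := hYb
  have hYint : IntegrableOn (fun s => Y s ω) (Icc 0 t) :=
    Measure.integrableOn_of_bounded measure_Icc_lt_top.ne hYm.aestronglyMeasurable
      (ae_restrict_of_forall_mem measurableSet_Icc hK)
  have hrestr : Integrable (fun s => restrTo t Y s ω) :=
    (integrable_indicator_iff measurableSet_Icc).2 hYint
  exact hrestr.intervalIntegrable.mul_continuousOn
    ((hX.comp (continuous_add_const ε)).sub hX).continuousOn

theorem IsAdmissibleClass.intervalIntegrable_restrTo_mul_increment {𝒜 : Set (ℝ → Ω → ℝ)}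
    (h𝒜 : IsAdmissibleClass 𝒜) {Y : ℝ → Ω → ℝ} (hY : Y ∈ 𝒜) {X : ℝ → Ω → ℝ}
    (hX : ∀ ω, Continuous fun s => X s ω) :
    ∀ t ∈ Ico (0:ℝ) 1, ∀ ε u ω,
      IntervalIntegrable (fun s => restrTo t Y s ω * (X (s + ε) ω - X s ω)) volume 0 u :=
  fun t ht ε u ω => _root_.intervalIntegrable_restrTo_mul_increment (Y := Y)
    ((h𝒜.2.2.1 Y hY).comp measurable_prodMk_right) (h𝒜.2.2.2 Y hY ω t ht) (hX ω) ε u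

omit [MeasurableSpace Ω] in
theorem fwdApprox_mul_sub {Y Y' X : ℝ → Ω → ℝ} (η : Ω → ℝ) {ε t : ℝ} {ω : Ω}
    (hY : IntervalIntegrable (fun s => Y s ω * (X (s + ε) ω - X s ω)) volume 0 t)
    (hY' : IntervalIntegrable (fun s => Y' s ω * (X (s + ε) ω - X s ω)) volume 0 t) :
    fwdApprox (fun s ω => η ω * (Y s ω - Y' s ω)) X ε t ω
      = η ω * (fwdApprox Y X ε t ω - fwdApprox Y' X ε t ω) := by
  unfold fwdApprox
  simp_rw [mul_assoc, sub_mul]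
  rw [intervalIntegral.integral_const_mul, intervalIntegral.integral_sub hY hY']
  ring

theorem IsForwardIntegral.mul_sub {P : Measure Ω} {Y Y' X J J' : ℝ → Ω → ℝ} {η : Ω → ℝ}
    {c : ℝ} (hη : ∀ ω, |η ω| ≤ c)
    (hY : ∀ ε t ω, IntervalIntegrable (fun s => Y s ω * (X (s + ε) ω - X s ω)) volume 0 t)
    (hY' : ∀ ε t ω, IntervalIntegrable (fun s => Y' s ω * (X (s + ε) ω - X s ω)) volume 0 t)
    (hJ : IsForwardIntegral P Y X J) (hJ' : IsForwardIntegral P Y' X J') :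
    IsForwardIntegral P (fun s ω => η ω * (Y s ω - Y' s ω)) X
      (fun t ω => η ω * (J t ω - J' t ω)) := by
  refine ⟨fun ω => continuousOn_const.mul ((hJ.1 ω).sub (hJ'.1 ω)), fun t ht => ?_⟩
  have happrox : (fun ε => fwdApprox (fun s ω => η ω * (Y s ω - Y' s ω)) X ε t)
      = fun ε ω => η ω * (fwdApprox Y X ε t - fwdApprox Y' X ε t) ω :=
    funext fun ε => funext fun ω => fwdApprox_mul_sub η (hY ε t ω) (hY' ε t ω)
  rw [happrox]
  exact ((hJ.2 t ht).sub (hJ'.2 t ht)).mul_left_of_bounded hη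

theorem IsImproperForwardIntegral.mul_sub {P : Measure Ω} {Y Y' X J J' : ℝ → Ω → ℝ}
    {η : Ω → ℝ} {c : ℝ} (hη : ∀ ω, |η ω| ≤ c)
    (hY : ∀ t ∈ Ico (0:ℝ) 1, ∀ ε u ω,
      IntervalIntegrable (fun s => restrTo t Y s ω * (X (s + ε) ω - X s ω)) volume 0 u)
    (hY' : ∀ t ∈ Ico (0:ℝ) 1, ∀ ε u ω,
      IntervalIntegrable (fun s => restrTo t Y' s ω * (X (s + ε) ω - X s ω)) volume 0 u)
    (hJ : IsImproperForwardIntegral P Y X J) (hJ' : IsImproperForwardIntegral P Y' X J') :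
    IsImproperForwardIntegral P (fun s ω => η ω * (Y s ω - Y' s ω)) X
      (fun t ω => η ω * (J t ω - J' t ω)) := by
  refine ⟨fun t ht => ?_, ?_⟩
  · rw [restrTo_mul_sub]
    exact (hJ.1 t ht).mul_sub hη (hY t ht) (hY' t ht) (hJ'.1 t ht)
  · filter_upwards [hJ.2, hJ'.2] with ω hω hω'
    exact tendsto_const_nhds.mul (hω.sub hω')

theorem ArbitrageFree.ae_eq_zero_of_gain_eq_abs {P : Measure Ω} {S : ℝ → Ω → ℝ}
    {𝒜 : Set (ℝ → Ω → ℝ)} (hNoArb : ArbitrageFree P S 𝒜) {θ J : ℝ → Ω → ℝ} (hθ : θ ∈ 𝒜)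
    (hJ : IsImproperForwardIntegral P θ S J) {D : Ω → ℝ}
    (hJD : J 1 =ᵐ[P] fun ω => |D ω|) : D =ᵐ[P] 0 := by
  have hnonneg : ∀ᵐ ω ∂P, 0 ≤ J 1 ω := by
    filter_upwards [hJD] with ω hω
    exact hω ▸ abs_nonneg _
  have hnull : P {ω | 0 < J 1 ω} = 0 :=
    nonpos_iff_eq_zero.1 (not_lt.1 fun hpos => hNoArb θ hθ ⟨J, hJ, hnonneg, hpos⟩)
  have hnonpos : ∀ᵐ ω ∂P, J 1 ω ≤ 0 := by
    simpa only [ae_iff, not_le] using hnull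
  filter_upwards [hJD, hnonpos] with ω hω hω'
  exact abs_nonpos_iff.1 (hω ▸ hω')

theorem replication_price_unique_general
    (P : Measure Ω)
    (𝓖 : ℝ → MeasurableSpace Ω)
    (𝒜 : Set (ℝ → Ω → ℝ)) (h𝒜 : IsAdmissibleClass 𝒜)
    (S : ℝ → Ω → ℝ) (hSclamp : Clamped S)
    (hScont : ∀ ω, ContinuousOn (fun t => S t ω) (Icc 0 1))
    (hNoArb : ArbitrageFree P S 𝒜)
    -- Assumption 4.25
    (hAss425 : ∀ η : Ω → ℝ, Measurable[𝓖 0] η →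
      ∀ h ∈ 𝒜, (fun t ω => η ω * h t ω) ∈ 𝒜)
    (C : Ω → ℝ) (X0 Y0 : Ω → ℝ)
    (hX0 : Measurable[𝓖 0] X0) (hY0 : Measurable[𝓖 0] Y0)
    (h k : ℝ → Ω → ℝ) (hh : h ∈ 𝒜) (hk : k ∈ 𝒜)
    (Jh Jk : ℝ → Ω → ℝ)
    (hJh : IsImproperForwardIntegral P h S Jh)
    (hJk : IsImproperForwardIntegral P k S Jk)
    (hrepl1 : ∀ᵐ ω ∂P, X0 ω + Jh 1 ω = C ω)
    (hrepl2 : ∀ᵐ ω ∂P, Y0 ω + Jk 1 ω = C ω) :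
    ∀ᵐ ω ∂P, X0 ω = Y0 ω := by
  set η : Ω → ℝ := fun ω => Real.sign (X0 ω - Y0 ω)
  have hη : Measurable[𝓖 0] η := Real.measurable_sign.comp (hX0.sub hY0)
  have hθ : (fun t ω => η ω * (k t ω - h t ω)) ∈ 𝒜 := by
    simpa only [neg_one_mul, ← sub_eq_add_neg] using
      hAss425 η hη _ (h𝒜.2.1 k hk _ (h𝒜.1 (-1) h hh))
  have hS : ∀ ω, Continuous fun t => S t ω := fun ω => hSclamp.continuous_path (hScont ω)
  have hJ := hJk.mul_sub (fun ω => Real.abs_sign_le_one (X0 ω - Y0 ω))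
    (h𝒜.intervalIntegrable_restrTo_mul_increment hk hS)
    (h𝒜.intervalIntegrable_restrTo_mul_increment hh hS) hJh
  have hgain : (fun ω => η ω * (Jk 1 ω - Jh 1 ω)) =ᵐ[P] fun ω => |X0 ω - Y0 ω| := by
    filter_upwards [hrepl1, hrepl2] with ω h1 h2
    rw [show Jk 1 ω - Jh 1 ω = X0 ω - Y0 ω by linarith]
    exact Real.sign_mul_self_eq_abs _
  filter_upwards [hNoArb.ae_eq_zero_of_gain_eq_abs hθ hJ hgain] with ω hω
  exact sub_eq_zero.1 hω

/-- Proposition 4.26: in an `𝒜`-arbitrage free market satisfying Assumption 4.25, the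
replication price of an `𝒜`-attainable contingent claim is unique. -/
theorem replication_price_unique
    (P : Measure Ω) [IsProbabilityMeasure P]
    (𝓖 : ℝ → MeasurableSpace Ω)
    (h𝓖mono : ∀ s t : ℝ, s ≤ t → 𝓖 s ≤ 𝓖 t)
    (h𝓖le : ∀ t, 𝓖 t ≤ ‹MeasurableSpace Ω›)
    (𝒜 : Set (ℝ → Ω → ℝ)) (h𝒜 : IsAdmissibleClass 𝒜)
    (S : ℝ → Ω → ℝ) (hSclamp : Clamped S)
    (hScont : ∀ ω, ContinuousOn (fun t => S t ω) (Icc 0 1))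
    (hSpos : ∀ t ω, 0 < S t ω)
    (hSqv : ∃ C, IsCovariation P S S C)
    (hNoArb : ArbitrageFree P S 𝒜)
    -- Assumption 4.25
    (hAss425 : ∀ η : Ω → ℝ, Measurable[𝓖 0] η →
      ∀ h ∈ 𝒜, (fun t ω => η ω * h t ω) ∈ 𝒜)
    (C : Ω → ℝ) (X0 Y0 : Ω → ℝ)
    (hX0 : Measurable[𝓖 0] X0) (hY0 : Measurable[𝓖 0] Y0)
    (h k : ℝ → Ω → ℝ) (hh : h ∈ 𝒜) (hk : k ∈ 𝒜)
    (Jh Jk : ℝ → Ω → ℝ)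
    (hJh : IsImproperForwardIntegral P h S Jh)
    (hJk : IsImproperForwardIntegral P k S Jk)
    (hrepl1 : ∀ᵐ ω ∂P, X0 ω + Jh 1 ω = C ω)
    (hrepl2 : ∀ᵐ ω ∂P, Y0 ω + Jk 1 ω = C ω) :
    ∀ᵐ ω ∂P, X0 ω = Y0 ω :=
  replication_price_unique_general P 𝓖 𝒜 h𝒜 S hSclamp hScont hNoArb hAss425 C X0 Y0 hX0 hY0 h k hh
    hk Jh Jk hJh hJk hrepl1 hrepl2
end
end

section
/- Proposition 4.38, item 2: Let M = (M_t, t∈[0,1]) be a continuous process with M₀ = m₀ a.s. fulfilling the full support condition, and let G = (G_t, t∈[0,1]) be a continuous process with G₀ = 0 a.s. which is independent of M (i.e. the σ-algebras generated by the C([0,1])-valued random variables M and G are independent). Then the process X = M + G (which satisfies X₀ = m₀ a.s.) also fulfills the full support condition. -/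
/-! Countably many uniform tubes cover the separable space of paths, so some tube
`{|G - g| ≤ ε/4}` has positive probability; since `G₀ = 0` a.s., `|g 0| ≤ ε/4`. By full
support, `M` stays within `ε/2` of `η - (g - g 0)` with positive probability, and by
independence both events occur together with positive probability, which forces `M + G`
within `ε` of `η`. -/

open MeasureTheory Filter Set Topology

noncomputable section

variable {Ω : Type*} [MeasurableSpace Ω]

def FullSupport (P : Measure Ω) (Y : ℝ → Ω → ℝ) (y0 : ℝ) : Prop :=
  ∀ η : ℝ → ℝ, ContinuousOn η (Icc 0 1) → η 0 = y0 →
    ∀ ε : ℝ, 0 < ε → 0 < P {ω | ∀ t ∈ Icc (0:ℝ) 1, |Y t ω - η t| ≤ ε}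

def pathTube {ι α : Type*} (s : Set ι) (Y : ι → α → ℝ) (f : ι → ℝ) (r : ℝ) :
    Set α :=
  {ω | ∀ t ∈ s, |Y t ω - f t| ≤ r}

section pathTube

variable {ι α : Type*} {s : Set ι} {Y Z : ι → α → ℝ} {f g : ι → ℝ}

lemma pathTube_subset_pathTube {f' : ι → ℝ} {r r' : ℝ}
    (h : ∀ t ∈ s, |f t - f' t| + r ≤ r') :
    pathTube s Y f r ⊆ pathTube s Y f' r' := fun ω hω t ht =>
  calc |Y t ω - f' t| ≤ |Y t ω - f t| + |f t - f' t| := abs_sub_le _ _ _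
    _ ≤ r' := by linarith [hω t ht, h t ht]

lemma pathTube_inter_subset_add {r r' : ℝ} :
    pathTube s Y f r ∩ pathTube s Z g r' ⊆
      pathTube s (fun t ω => Y t ω + Z t ω) (fun t => f t + g t) (r + r') :=
  fun ω ⟨hY, hZ⟩ t ht =>
  calc |Y t ω + Z t ω - (f t + g t)| = |(Y t ω - f t) + (Z t ω - g t)| := by ring_nf
    _ ≤ |Y t ω - f t| + |Z t ω - g t| := abs_add_le _ _
    _ ≤ r + r' := add_le_add (hY t ht) (hZ t ht)

/-- Continuity of the paths reduces the tube to countably many coordinates, those in a dense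
subset of `s`. -/
lemma measurableSet_pathTube [TopologicalSpace ι] [TopologicalSpace.SeparableSpace s]
    (hY : ∀ ω, ContinuousOn (fun t => Y t ω) s) (hf : ContinuousOn f s) (r : ℝ) :
    MeasurableSet[⨆ t ∈ s, MeasurableSpace.comap (Y t) inferInstance] (pathTube s Y f r) := by
  obtain ⟨D, hDc, hDd⟩ := TopologicalSpace.exists_countable_dense s
  have hD : pathTube s Y f r = ⋂ t ∈ D, {ω | |Y t ω - f t| ≤ r} := by
    ext ω
    refine ⟨fun h => mem_iInter₂.2 fun t _ => h t t.2, fun h t ht => ?_⟩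
    have hclosed : IsClosed {u : s | |Y u ω - f u| ≤ r} :=
      isClosed_le (((hY ω).sub hf).abs.domRestrict) continuous_const
    have hall := hDd.closure_eq ▸ hclosed.closure_subset_iff.2 fun u hu => mem_iInter₂.1 h u hu
    exact hall (mem_univ ⟨t, ht⟩)
  rw [hD]
  refine MeasurableSet.biInter (hDc.mono fun _ => id) fun t _ => ?_
  refine le_biSup (fun t => MeasurableSpace.comap (Y t) inferInstance) t.2 _
    ⟨{x | |x - f t| ≤ r}, measurableSet_le (by fun_prop) measurable_const, rfl⟩

end pathTube

lemma exists_measure_preimage_ball_ne_zero {α E : Type*} [MeasurableSpace α]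
    [PseudoMetricSpace E] [TopologicalSpace.SeparableSpace E] (μ : Measure α) [NeZero μ]
    (X : α → E) {r : ℝ} (hr : 0 < r) : ∃ x, μ (X ⁻¹' Metric.ball x r) ≠ 0 := by
  obtain ⟨D, hDc, hDd⟩ := TopologicalSpace.exists_countable_dense E
  by_contra! h
  have hnull : μ (X ⁻¹' ⋃ c ∈ D, Metric.ball c r) = 0 := by
    rw [preimage_iUnion₂]
    exact (measure_biUnion_null_iff hDc).2 fun c _ => h c
  rw [(Metric.dense_iff_iUnion_ball D).1 hDd r hr, preimage_univ] at hnull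
  exact NeZero.ne μ (Measure.measure_univ_eq_zero.1 hnull)

lemma exists_continuous_measure_pathTube_ne_zero {α : Type*} [MeasurableSpace α]
    (μ : Measure α) [NeZero μ] {a b : ℝ} (hab : a ≤ b) {Y : ℝ → α → ℝ}
    (hY : ∀ ω, ContinuousOn (fun t => Y t ω) (Icc a b)) {r : ℝ} (hr : 0 < r) :
    ∃ g : ℝ → ℝ, Continuous g ∧ μ (pathTube (Icc a b) Y g r) ≠ 0 := by
  let path : α → C(Icc a b, ℝ) := fun ω => ⟨_, (hY ω).domRestrict⟩
  obtain ⟨g, hg⟩ := exists_measure_preimage_ball_ne_zero μ path hr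
  refine ⟨IccExtend hab g, g.continuous.Icc_extend', fun h => hg (measure_mono_null ?_ h)⟩
  intro ω hω t ht
  rw [IccExtend_of_mem hab g ht]
  exact (ContinuousMap.dist_apply_le_dist (f := path ω) (g := g) ⟨t, ht⟩).trans
    (Metric.mem_ball.1 hω).le

theorem full_support_add_independent_general
    (P : Measure Ω) [IsProbabilityMeasure P]
    (M G : ℝ → Ω → ℝ) (m0 : ℝ)
    (hMcont : ∀ ω, ContinuousOn (fun t => M t ω) (Icc 0 1))
    (hGcont : ∀ ω, ContinuousOn (fun t => G t ω) (Icc 0 1))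
    (hG0 : ∀ᵐ ω ∂P, G 0 ω = 0)
    (hindep : ProbabilityTheory.Indep
      (⨆ t ∈ Icc (0:ℝ) 1, MeasurableSpace.comap (M t) (inferInstance : MeasurableSpace ℝ))
      (⨆ t ∈ Icc (0:ℝ) 1, MeasurableSpace.comap (G t) (inferInstance : MeasurableSpace ℝ))
      P)
    (hMfs : FullSupport P M m0) :
    FullSupport P (fun t ω => M t ω + G t ω) m0 := by
  intro η hη hη0 ε hε
  obtain ⟨g, hg, hPG⟩ :=
    exists_continuous_measure_pathTube_ne_zero P zero_le_one hGcont (r := ε / 4) (by positivity)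
  obtain ⟨ω₀, hω₀, hG0ω₀⟩ := ((frequently_ae_mem_iff.2 hPG).and_eventually hG0).exists
  have hg0 : |g 0| ≤ ε / 4 := by simpa [hG0ω₀] using hω₀ 0 ⟨le_rfl, zero_le_one⟩
  set η' : ℝ → ℝ := fun t => η t - (g t - g 0)
  have hη' : ContinuousOn η' (Icc 0 1) := hη.sub (hg.continuousOn.sub continuousOn_const)
  have hPM : 0 < P (pathTube (Icc 0 1) M η' (ε / 2)) :=
    hMfs η' hη' (by simp [η', hη0]) (ε / 2) (by positivity)
  have hshift :
      pathTube (Icc 0 1) G g (ε / 4) ⊆ pathTube (Icc 0 1) G (fun t => g t - g 0) (ε / 2) :=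
    pathTube_subset_pathTube fun t _ => by simp only [sub_sub_cancel]; linarith
  have hsum : (fun t => η' t + (g t - g 0)) = η := funext fun t => sub_add_cancel _ _
  calc 0 < P (pathTube (Icc 0 1) M η' (ε / 2)) * P (pathTube (Icc 0 1) G g (ε / 4)) :=
        ENNReal.mul_pos hPM.ne' hPG
    _ = P (pathTube (Icc 0 1) M η' (ε / 2) ∩ pathTube (Icc 0 1) G g (ε / 4)) :=
        ((ProbabilityTheory.Indep_iff _ _ P).1 hindep _ _ (measurableSet_pathTube hMcont hη' _)
          (measurableSet_pathTube hGcont hg.continuousOn _)).symm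
    _ ≤ P (pathTube (Icc 0 1) (fun t ω => M t ω + G t ω) η (ε / 2 + ε / 2)) := by
        rw [← hsum]
        exact measure_mono ((inter_subset_inter_right _ hshift).trans pathTube_inter_subset_add)
    _ = _ := by rw [add_halves]; rfl

/-- Proposition 4.38, item 2: if `M` fulfills the full support condition and `G` is a
continuous process with `G₀ = 0` independent of `M`, then `X = M + G` fulfills the full
support condition. -/
theorem full_support_add_independent
    (P : Measure Ω) [IsProbabilityMeasure P]
    (M G : ℝ → Ω → ℝ) (m0 : ℝ)
    (hMcont : ∀ ω, ContinuousOn (fun t => M t ω) (Icc 0 1))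
    (hGcont : ∀ ω, ContinuousOn (fun t => G t ω) (Icc 0 1))
    (hMmeas : ∀ t, Measurable (M t))
    (hGmeas : ∀ t, Measurable (G t))
    (hM0 : ∀ᵐ ω ∂P, M 0 ω = m0)
    (hG0 : ∀ᵐ ω ∂P, G 0 ω = 0)
    (hindep : ProbabilityTheory.Indep
      (⨆ t ∈ Icc (0:ℝ) 1, MeasurableSpace.comap (M t) (inferInstance : MeasurableSpace ℝ))
      (⨆ t ∈ Icc (0:ℝ) 1, MeasurableSpace.comap (G t) (inferInstance : MeasurableSpace ℝ))
      P)
    (hMfs : FullSupport P M m0) :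
    FullSupport P (fun t ω => M t ω + G t ω) m0 :=
  full_support_add_independent_general P M G m0 hMcont hGcont hG0 hindep hMfs
end
end
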